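/- arXiv:1011.1587 — 5 statements merged into one kernel-verified Lean document; each statement's English description precedes it below -/
import Mathlib

section
/- The map γ satisfies the group 2-cocycle relation γ(x, y+z) · γ(y, z) = γ(x+y, z) · γ(x, y) in Adj(A(M,T)) for all x, y, z ∈ M. -/
/-!
Common setup: the adjoint group of the Alexander quandle `A(M,T)` (F.J.-B.J. Clauwens,
"The adjoint group of an Alexander quandle").

For an abelian group `M` with automorphism `T`, the Alexander quandle `A(M,T)` is `M` with
`y * x = T y + x - T x`, and the adjoint group `Adj(A(M,T))` is presented with generators
`e x` for `x : M` and relations `e (y * x) = (e x)⁻¹ * e y * e x`.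
-/

open scoped TensorProduct

namespace Clauwens

variable {M : Type*} [AddCommGroup M]

/-- The relations of the adjoint group of the Alexander quandle `A(M,T)`:
for each `x y : M`, the relation `e_{y*x} = e_x⁻¹ * e_y * e_x`, where `y*x = T y + x - T x`. -/
def rels (T : M ≃+ M) : Set (FreeGroup M) :=
  {r | ∃ x y : M, r = FreeGroup.of (T y + x - T x) *
      ((FreeGroup.of x)⁻¹ * FreeGroup.of y * FreeGroup.of x)⁻¹}

/-- The adjoint group `Adj(A(M,T))` of the Alexander quandle. -/
abbrev Adj (T : M ≃+ M) : Type _ := PresentedGroup (rels T)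

/-- The generator `e_x` of the adjoint group. -/
def e (T : M ≃+ M) (x : M) : Adj T := PresentedGroup.of x

/-- The quandle automorphism `p ↦ p * x = T p + x - T x` of `A(M,T)`. -/
def σ (T : M ≃+ M) (x : M) : Equiv.Perm M where
  toFun p := T p + (x - T x)
  invFun p := T.symm (p - (x - T x))
  left_inv p := by simp
  right_inv p := by simp

lemma σ_apply (T : M ≃+ M) (x p : M) : σ T x p = T p + (x - T x) := rfl

lemma σ_inv_apply (T : M ≃+ M) (x p : M) : (σ T x)⁻¹ p = T.symm (p - (x - T x)) := rfl

lemma σ_rel (T : M ≃+ M) (x y : M) :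
    σ T x * σ T y * (σ T x)⁻¹ = σ T (T y + x - T x) := by
  ext p
  simp only [Equiv.Perm.mul_apply, σ_apply, σ_inv_apply, map_add, map_sub,
    AddEquiv.apply_symm_apply]
  abel

/-- The homomorphism `ρ` from the adjoint group to the group of quandle automorphisms of
`A(M,T)` acting on the right of `M` (hence the `ᵐᵒᵖ`), induced by the right action
`p · e_x = p * x = T p + x - T x`; the automorphism by which `g` acts is `(ρ T g).unop`. -/
def ρ (T : M ≃+ M) : Adj T →* (Equiv.Perm M)ᵐᵒᵖ :=
  PresentedGroup.toGroup (f := fun x => MulOpposite.op (σ T x)) (by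
    rintro r ⟨x, y, rfl⟩
    simp only [map_mul, map_inv, FreeGroup.lift_apply_of, ← MulOpposite.op_inv, ← MulOpposite.op_mul,
      mul_inv_rev, inv_inv]
    rw [MulOpposite.op_eq_one_iff, ← σ_rel T x y]
    group)

/-- `γ(x,y) = e_0⁻¹ e_{x+y} e_y⁻¹ e_0 e_x⁻¹ e_0`, so that
`e_0⁻¹ e_{x+y} = γ(x,y) e_0⁻¹ e_x e_0⁻¹ e_y`. -/
def γ (T : M ≃+ M) (x y : M) : Adj T :=
  (e T 0)⁻¹ * e T (x + y) * (e T y)⁻¹ * e T 0 * (e T x)⁻¹ * e T 0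

/-- `λ(x,y) = γ(y,x)⁻¹ γ(x,y)`. -/
def lam (T : M ≃+ M) (x y : M) : Adj T := (γ T y x)⁻¹ * γ T x y

/-- The additive endomorphism `τ` of `M ⊗_ℤ M` with `τ(x ⊗ y) = T y ⊗ x`. -/
noncomputable def τmap (T : M ≃+ M) : M ⊗[ℤ] M →ₗ[ℤ] M ⊗[ℤ] M :=
  (TensorProduct.comm ℤ M M).toLinearMap ∘ₗ
    (LinearMap.lTensor M T.toAddMonoidHom.toIntLinearMap)

lemma τmap_tmul (T : M ≃+ M) (x y : M) : τmap T (x ⊗ₜ[ℤ] y) = T y ⊗ₜ[ℤ] x := rfl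

/-- `S(M,T) = coker(1 - τ) = (M ⊗_ℤ M)/im(1 - τ)`. -/
abbrev S (T : M ≃+ M) : Type _ :=
  (M ⊗[ℤ] M) ⧸ LinearMap.range (LinearMap.id - τmap T)

/-- The class `[x ⊗ y]` in `S(M,T)`. -/
noncomputable def cls (T : M ≃+ M) (x y : M) : S T := Submodule.Quotient.mk (x ⊗ₜ[ℤ] y)

lemma mk_τmap (T : M ≃+ M) (w : M ⊗[ℤ] M) :
    (Submodule.Quotient.mk (τmap T w) : S T) = Submodule.Quotient.mk w := by
  rw [Submodule.Quotient.eq]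
  exact ⟨-w, by simp [LinearMap.sub_apply]; abel⟩

lemma cls_T (T : M ≃+ M) (x y : M) : cls T (T x) (T y) = cls T x y := by
  have h1 : cls T (T x) (T y) = Submodule.Quotient.mk (τmap T (T y ⊗ₜ[ℤ] x)) := rfl
  have h2 : (Submodule.Quotient.mk (T y ⊗ₜ[ℤ] x) : S T)
      = Submodule.Quotient.mk (τmap T (x ⊗ₜ[ℤ] y)) := rfl
  rw [h1, mk_τmap, h2, mk_τmap]; rfl

lemma cls_add_left (T : M ≃+ M) (x x' y : M) :
    cls T (x + x') y = cls T x y + cls T x' y := by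
  simp only [cls, ← Submodule.Quotient.mk_add, TensorProduct.add_tmul]

lemma cls_add_right (T : M ≃+ M) (x y y' : M) :
    cls T x (y + y') = cls T x y + cls T x y' := by
  simp only [cls, ← Submodule.Quotient.mk_add, TensorProduct.tmul_add]

lemma cls_neg_left (T : M ≃+ M) (x y : M) : cls T (-x) y = -cls T x y := by
  simp only [cls, ← Submodule.Quotient.mk_neg, TensorProduct.neg_tmul]

lemma cls_zero_left (T : M ≃+ M) (y : M) : cls T 0 y = 0 := by
  simp [cls, TensorProduct.zero_tmul]

lemma cls_zero_right (T : M ≃+ M) (x : M) : cls T x 0 = 0 := by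
  simp [cls, TensorProduct.tmul_zero]

/-- `T^m` for `m : ℤ`. -/
def Tz (T : M ≃+ M) (m : ℤ) : M ≃+ M := (m • T : AddAut M)

lemma Tz_zero (T : M ≃+ M) (x : M) : Tz T 0 x = x := rfl

lemma Tz_one (T : M ≃+ M) (x : M) : Tz T 1 x = T x := by simp [Tz]

lemma Tz_add (T : M ≃+ M) (m n : ℤ) (x : M) : Tz T (m + n) x = Tz T m (Tz T n x) := by
  simp [Tz, add_zsmul, AddAut.add_apply]

lemma cls_Tz_shift (T : M ≃+ M) (m : ℤ) (x y : M) :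
    cls T (Tz T (m + 1) x) (Tz T (m + 1) y) = cls T (Tz T m x) (Tz T m y) := by
  have h : ∀ z : M, Tz T (m + 1) z = T (Tz T m z) := by
    intro z; rw [add_comm, Tz_add, Tz_one]
  rw [h, h, cls_T]

lemma cls_Tz (T : M ≃+ M) (m : ℤ) (x y : M) :
    cls T (Tz T m x) (Tz T m y) = cls T x y := by
  induction m using Int.induction_on with
  | zero => rfl
  | succ i ih => rw [cls_Tz_shift, ih]
  | pred i ih =>
      have h := cls_Tz_shift T (-(i : ℤ) - 1) x y
      rw [sub_add_cancel] at h
      rw [← h, ih]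

/-- `F(M,T)` is the set `ℤ × M × S(M,T)` equipped with the multiplication
`(k, x, α)(m, y, β) = (k + m, T^m x + y, α + β + [T^m x ⊗ y])`. -/
abbrev F (T : M ≃+ M) : Type _ := ℤ × M × S T

noncomputable instance (T : M ≃+ M) : Group (F T) where
  mul g h := (g.1 + h.1, Tz T h.1 g.2.1 + h.2.1, g.2.2 + h.2.2 + cls T (Tz T h.1 g.2.1) h.2.1)
  one := ((0 : ℤ), (0 : M), (0 : S T))
  inv g := (-g.1, -(Tz T (-g.1) g.2.1), -g.2.2 + cls T g.2.1 g.2.1)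
  mul_assoc g h k := by
    obtain ⟨a, x, α⟩ := g; obtain ⟨b, y, β⟩ := h; obtain ⟨c, z, δ⟩ := k
    refine Prod.ext (add_assoc a b c) (Prod.ext ?_ ?_)
    · show Tz T c (Tz T b x + y) + z = Tz T (b + c) x + (Tz T c y + z)
      rw [add_comm b c, Tz_add, map_add]
      abel
    · show α + β + cls T (Tz T b x) y + δ + cls T (Tz T c (Tz T b x + y)) z
        = α + (β + δ + cls T (Tz T c y) z) + cls T (Tz T (b + c) x) (Tz T c y + z)
      rw [add_comm b c, Tz_add, map_add, cls_add_left, cls_add_right]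
      have h1 : cls T (Tz T c (Tz T b x)) (Tz T c y) = cls T (Tz T b x) y := cls_Tz T c _ _
      rw [h1]
      abel
  one_mul g := by
    obtain ⟨a, x, α⟩ := g
    refine Prod.ext (zero_add a) (Prod.ext ?_ ?_)
    · show Tz T a 0 + x = x
      rw [map_zero, zero_add]
    · show 0 + α + cls T (Tz T a 0) x = α
      rw [map_zero, cls_zero_left, zero_add, add_zero]
  mul_one g := by
    obtain ⟨a, x, α⟩ := g
    refine Prod.ext (add_zero a) (Prod.ext ?_ ?_)
    · show Tz T 0 x + 0 = x
      rw [Tz_zero, add_zero]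
    · show α + 0 + cls T (Tz T 0 x) 0 = α
      rw [cls_zero_right, add_zero, add_zero]
  inv_mul_cancel g := by
    obtain ⟨a, x, α⟩ := g
    have hx : Tz T a (Tz T (-a) x) = x := by
      rw [← Tz_add, add_neg_cancel, Tz_zero]
    refine Prod.ext (neg_add_cancel a) (Prod.ext ?_ ?_)
    · show Tz T a (-(Tz T (-a) x)) + x = 0
      rw [map_neg, hx, neg_add_cancel]
    · show -α + cls T x x + α + cls T (Tz T a (-(Tz T (-a) x))) x = 0
      rw [map_neg, hx, cls_neg_left]
      abel

/-- The canonical augmentation `ε : Adj(A(M,T)) → ℤ`, with `ε(e_x) = 1` for all `x`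
(written multiplicatively since `Adj` is a multiplicative group). -/
def ε (T : M ≃+ M) : Adj T →* Multiplicative ℤ :=
  PresentedGroup.toGroup (f := fun _ => Multiplicative.ofAdd (1 : ℤ)) (by
    rintro r ⟨x, y, rfl⟩
    simp only [map_mul, map_inv, FreeGroup.lift_apply_of]
    group)

/-- The subgroup `F(M,T)⁰` of elements `(0, x, α)` of `F(M,T)`. -/
noncomputable def Fo (T : M ≃+ M) : Subgroup (F T) where
  carrier := {g | g.1 = 0}
  mul_mem' := by
    rintro ⟨a, x, α⟩ ⟨b, y, β⟩ (ha : a = 0) (hb : b = 0)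
    show a + b = 0
    rw [ha, hb, add_zero]
  one_mem' := rfl
  inv_mem' := by
    rintro ⟨a, x, α⟩ (ha : a = 0)
    show -a = 0
    rw [ha, neg_zero]

/-- The fundamental group `π₁(A(M,T), 0)` of the Alexander quandle based at `0 ∈ M`:
the elements of `ker ε` fixing the base point `0`. -/
def pi1 (T : M ≃+ M) : Subgroup (Adj T) where
  carrier := {g | g ∈ (ε T).ker ∧ (ρ T g).unop 0 = 0}
  one_mem' := ⟨(ε T).ker.one_mem, by simp⟩
  mul_mem' := by
    intro a b ha hb
    refine ⟨(ε T).ker.mul_mem ha.1 hb.1, ?_⟩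
    show ((ρ T) (a * b)).unop 0 = 0
    rw [map_mul, MulOpposite.unop_mul, Equiv.Perm.mul_apply, ha.2, hb.2]
  inv_mem' := by
    intro a ha
    refine ⟨(ε T).ker.inv_mem ha.1, ?_⟩
    show ((ρ T) a⁻¹).unop 0 = 0
    rw [map_inv, MulOpposite.unop_inv]
    exact Equiv.Perm.inv_eq_iff_eq.mpr ha.2.symm

/-- Expand `f (x + y + z)` along both bracketings. -/
theorem cocycle_of_central_factor {G A : Type*} [Group G] [AddSemigroup A] (f : A → G)
    (c : A → A → G) (hc : ∀ x y, c x y ∈ Subgroup.center G)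
    (hf : ∀ x y, f (x + y) = c x y * f x * f y) (x y z : A) :
    c x (y + z) * c y z = c (x + y) z * c x y := by
  have hcomm : c y z * f x = f x * c y z := (Subgroup.mem_center_iff.mp (hc y z) (f x)).symm
  refine mul_right_cancel (b := f x * f y * f z) ?_
  calc c x (y + z) * c y z * (f x * f y * f z)
      = c x (y + z) * (c y z * f x) * f y * f z := by simp only [mul_assoc]
    _ = f (x + (y + z)) := by rw [hcomm, hf, hf]; simp only [mul_assoc]
    _ = c (x + y) z * c x y * (f x * f y * f z) := by
      rw [← add_assoc, hf, hf]; simp only [mul_assoc]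

lemma e_inv_mul_mul (T : M ≃+ M) (x y : M) :
    (e T x)⁻¹ * e T y * e T x = e T (T y + x - T x) :=
  (PresentedGroup.mk_eq_mk_of_mul_inv_mem (show _ ∈ rels T from ⟨x, y, rfl⟩)).symm

lemma e_zero_mul_mul_inv (T : M ≃+ M) (p : M) :
    e T 0 * e T p * (e T 0)⁻¹ = e T (T.symm p) := by
  have := e_inv_mul_mul T 0 (T.symm p)
  rw [map_zero, sub_zero, add_zero, AddEquiv.apply_symm_apply] at this
  rw [← this]
  group

lemma mem_center_of_commute_e (T : M ≃+ M) {g : Adj T} (hg : ∀ p, e T p * g = g * e T p) :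
    g ∈ Subgroup.center (Adj T) := by
  rw [← Subgroup.centralizer_univ, ← Subgroup.coe_top, ← PresentedGroup.closure_range_of,
    Subgroup.centralizer_closure]
  rintro _ ⟨p, rfl⟩
  exact hg p

/-- `h x = e_0⁻¹ e_x` acts on `A(M,T)` as the translation by `x - T x`. -/
def h (T : M ≃+ M) (x : M) : Adj T := (e T 0)⁻¹ * e T x

lemma h_inv_mul_e_mul_h (T : M ≃+ M) (x p : M) :
    (h T x)⁻¹ * e T p * h T x = e T (p + x - T x) := by
  have : (h T x)⁻¹ * e T p * h T x = (e T x)⁻¹ * (e T 0 * e T p * (e T 0)⁻¹) * e T x := by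
    unfold h; group
  rw [this, e_zero_mul_mul_inv, e_inv_mul_mul, AddEquiv.apply_symm_apply]

lemma h_add (T : M ≃+ M) (x y : M) : h T (x + y) = γ T x y * h T x * h T y := by
  unfold h γ; group

/-- Both sides are conjugation by the translation by `x + y - T (x + y)`. -/
lemma h_mul_h_inv_mul_e_mul (T : M ≃+ M) (x y p : M) :
    (h T x * h T y)⁻¹ * e T p * (h T x * h T y) = (h T (x + y))⁻¹ * e T p * h T (x + y) :=
  calc (h T x * h T y)⁻¹ * e T p * (h T x * h T y)
      = (h T y)⁻¹ * ((h T x)⁻¹ * e T p * h T x) * h T y := by group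
    _ = e T (p + x - T x + y - T y) := by rw [h_inv_mul_e_mul_h, h_inv_mul_e_mul_h]
    _ = (h T (x + y))⁻¹ * e T p * h T (x + y) := by
      rw [h_inv_mul_e_mul_h, map_add]; congr 1; abel

lemma γ_mem_center (T : M ≃+ M) (x y : M) : γ T x y ∈ Subgroup.center (Adj T) := by
  refine mem_center_of_commute_e T fun p => ?_
  have hγ : γ T x y = h T (x + y) * (h T x * h T y)⁻¹ := by
    rw [h_add]; group
  calc e T p * γ T x y
      = h T (x + y) * ((h T (x + y))⁻¹ * e T p * h T (x + y)) * (h T x * h T y)⁻¹ := by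
        rw [hγ]; group
    _ = γ T x y * e T p := by rw [← h_mul_h_inv_mul_e_mul, hγ]; group

/-- The group 2-cocycle relation `γ(x, y+z) γ(y, z) = γ(x+y, z) γ(x, y)` for all `x y z ∈ M`. -/
theorem statement3 (T : M ≃+ M) (x y z : M) :
    γ T x (y + z) * γ T y z = γ T (x + y) z * γ T x y :=
  cocycle_of_central_factor (h T) (γ T) (γ_mem_center T) (h_add T) x y z

end Clauwens
end

section
/- The map λ : M × M → Adj(A(M,T)) defined by λ(x,y) = γ(y,x)^{-1} γ(x,y) equals the commutator [e_0^{-1} e_y, e_0^{-1} e_x] = (e_0^{-1} e_y)^{-1} (e_0^{-1} e_x)^{-1} (e_0^{-1} e_y)(e_0^{-1} e_x), and it satisfies λ(u, v) = γ(v − T v, u)^{-1} for all u, v ∈ M. -/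
/-!
Common setup: the adjoint group of the Alexander quandle `A(M,T)` (F.J.-B.J. Clauwens,
"The adjoint group of an Alexander quandle").

For an abelian group `M` with automorphism `T`, the Alexander quandle `A(M,T)` is `M` with
`y * x = T y + x - T x`, and the adjoint group `Adj(A(M,T))` is presented with generators
`e x` for `x : M` and relations `e (y * x) = (e x)⁻¹ * e y * e x`.
-/

open scoped TensorProduct

namespace Clauwens

variable {M : Type*} [AddCommGroup M]

/-!
Write `a z = e₀⁻¹ e_z`. The quandle relations say that conjugation by `a p` sends `a z` to
`(a d)⁻¹ a (z + d)` with `d = p - T p`; as `p ↦ p - T p` is additive, `a (x + y)` and `a x a y`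
induce the same conjugation on the `a w`, so `γ(x,y) = a (x + y) (a x a y)⁻¹` commutes with all of
them. Then `λ(x,y) = (a y a x)(a x a y)⁻¹` is central among the `a w`, which turns it into the
commutator, and `a (v - T v + u) = a (T v)⁻¹ a u a v` exhibits `γ(v - T v, u)` as a conjugate of
`λ(v,u) = λ(u,v)⁻¹`.
-/

section GroupLemmas

variable {G : Type*} [Group G]

theorem commute_mul_inv_of_conj_eq {g h k : G} (H : g⁻¹ * k * g = h⁻¹ * k * h) :
    Commute (g * h⁻¹) k := by
  have hk : k * g = g * (h⁻¹ * k * h) := by rw [← H]; group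
  calc g * h⁻¹ * k = g * (h⁻¹ * k * h) * h⁻¹ := by group
    _ = k * (g * h⁻¹) := by rw [← hk]; group

theorem inv_mul_inv_mul_mul_eq_of_commute {g h : G}
    (hc : Commute (g * h * (h * g)⁻¹) (h * g)) :
    g⁻¹ * h⁻¹ * g * h = g * h * (h * g)⁻¹ := by
  calc g⁻¹ * h⁻¹ * g * h = (h * g)⁻¹ * (g * h * (h * g)⁻¹ * (h * g)) := by group
    _ = g * h * (h * g)⁻¹ := by rw [hc.eq]; group

end GroupLemmas

section Adjoint

variable (T : M ≃+ M)

theorem e_conj (x y : M) : (e T x)⁻¹ * e T y * e T x = e T (T y + x - T x) := by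
  have h : PresentedGroup.mk (rels T) (FreeGroup.of (T y + x - T x) *
      ((FreeGroup.of x)⁻¹ * FreeGroup.of y * FreeGroup.of x)⁻¹) = 1 :=
    (QuotientGroup.eq_one_iff _).mpr (Subgroup.subset_normalClosure ⟨x, y, rfl⟩)
  simp only [map_mul, map_inv, mul_inv_eq_one] at h
  exact h.symm

theorem e_zero_conj_e (z : M) : e T 0 * e T z * (e T 0)⁻¹ = e T (T.symm z) := by
  have h := e_conj T 0 (T.symm z)
  rw [T.apply_symm_apply, map_zero, add_zero, sub_zero] at h
  rw [← h]; group

def a (z : M) : Adj T := (e T 0)⁻¹ * e T z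

theorem a_zero : a T 0 = 1 := inv_mul_cancel _

theorem a_add_sub (x z : M) : a T (z + x - T x) = (a T (T x))⁻¹ * a T z * a T x := by
  have hTx := e_conj T 0 x
  rw [map_zero, add_zero, sub_zero] at hTx
  have hz := e_conj T x (T.symm z)
  rw [T.apply_symm_apply] at hz
  simp only [a]
  rw [← hTx, ← hz, ← e_zero_conj_e]
  group

theorem a_sub (x : M) : a T (x - T x) = (a T (T x))⁻¹ * a T x := by
  simpa [a_zero] using a_add_sub T x 0

theorem a_conj (p z : M) :
    (a T p)⁻¹ * a T z * a T p = (a T (p - T p))⁻¹ * a T (z + (p - T p)) := by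
  rw [a_sub, add_sub_assoc', a_add_sub]
  group

theorem a_conj_mul (x y w : M) :
    (a T x * a T y)⁻¹ * a T w * (a T x * a T y) = (a T (x + y))⁻¹ * a T w * a T (x + y) := by
  have hd : x + y - T (x + y) = (x - T x) + (y - T y) := by rw [map_add]; abel
  calc (a T x * a T y)⁻¹ * a T w * (a T x * a T y)
      = (a T y)⁻¹ * ((a T x)⁻¹ * a T w * a T x) * a T y := by group
    _ = ((a T y)⁻¹ * a T (x - T x) * a T y)⁻¹ *
          ((a T y)⁻¹ * a T (w + (x - T x)) * a T y) := by rw [a_conj]; group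
    _ = (a T (x + y))⁻¹ * a T w * a T (x + y) := by
      rw [a_conj, a_conj, a_conj, hd, add_assoc]; group

theorem γ_eq (x y : M) : γ T x y = a T (x + y) * (a T x * a T y)⁻¹ := by
  simp only [γ, a]; group

theorem commute_γ_a (x y w : M) : Commute (γ T x y) (a T w) := by
  rw [γ_eq]
  exact commute_mul_inv_of_conj_eq (a_conj_mul T x y w).symm

theorem lam_eq (x y : M) : lam T x y = a T y * a T x * (a T x * a T y)⁻¹ := by
  rw [lam, γ_eq, γ_eq, add_comm]; group

theorem commute_lam_a (x y w : M) : Commute (lam T x y) (a T w) :=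
  (commute_γ_a T y x w).inv_left.mul_left (commute_γ_a T x y w)

theorem γ_sub_eq_lam_inv (u v : M) : γ T (v - T v) u = (lam T u v)⁻¹ := by
  have hsum : a T (v - T v + u) = (a T (T v))⁻¹ * a T u * a T v := by
    rw [← a_add_sub]; congr 1; abel
  have hconj : γ T (v - T v) u = (a T (T v))⁻¹ * lam T v u * a T (T v) := by
    rw [γ_eq, hsum, a_sub, lam_eq]; group
  rw [hconj, mul_assoc, (commute_lam_a T v u (T v)).eq, inv_mul_cancel_left, lam_eq, lam_eq]
  group

end Adjoint

/-- `λ(x,y) = γ(y,x)⁻¹ γ(x,y)` equals the commutator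
`[e_0⁻¹ e_y, e_0⁻¹ e_x] = (e_0⁻¹ e_y)⁻¹ (e_0⁻¹ e_x)⁻¹ (e_0⁻¹ e_y)(e_0⁻¹ e_x)`,
and `λ(u, v) = γ(v - T v, u)⁻¹` for all `u v ∈ M`. -/
theorem statement6 (T : M ≃+ M) :
    (∀ x y : M, lam T x y =
      ((e T 0)⁻¹ * e T y)⁻¹ * ((e T 0)⁻¹ * e T x)⁻¹ *
        ((e T 0)⁻¹ * e T y) * ((e T 0)⁻¹ * e T x)) ∧
    (∀ u v : M, lam T u v = (γ T (v - T v) u)⁻¹) := by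
  refine ⟨fun x y => ?_, fun u v => by rw [γ_sub_eq_lam_inv, inv_inv]⟩
  rw [lam_eq]
  refine (inv_mul_inv_mul_mul_eq_of_commute ?_).symm
  rw [← lam_eq]
  exact (commute_lam_a T x y x).mul_right (commute_lam_a T x y y)

end Clauwens
end

section
/- The set F(M,T) = ℤ × M × S(M,T), equipped with the multiplication (k, x, α)(m, y, β) = (k + m, T^m x + y, α + β + [T^m x ⊗ y]), is a group, with identity (0, 0, 0) and inverse (k, x, α)^{-1} = (−k, −T^{−k} x, −α + [x ⊗ x]). -/
/-!
Common setup: the adjoint group of the Alexander quandle `A(M,T)` (F.J.-B.J. Clauwens,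
"The adjoint group of an Alexander quandle").

For an abelian group `M` with automorphism `T`, the Alexander quandle `A(M,T)` is `M` with
`y * x = T y + x - T x`, and the adjoint group `Adj(A(M,T))` is presented with generators
`e x` for `x : M` and relations `e (y * x) = (e x)⁻¹ * e y * e x`.
-/

open scoped TensorProduct

namespace Clauwens

variable {M : Type*} [AddCommGroup M]

/-- The multiplication `(k, x, α)(m, y, β) = (k + m, T^m x + y, α + β + [T^m x ⊗ y])`
on `ℤ × M × S(M,T)`. -/
noncomputable def fmul (T : M ≃+ M) (g h : ℤ × M × S T) : ℤ × M × S T :=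
  (g.1 + h.1, Tz T h.1 g.2.1 + h.2.1, g.2.2 + h.2.2 + cls T (Tz T h.1 g.2.1) h.2.1)

/-- The proposed inverse `(k, x, α)⁻¹ = (-k, -T^{-k} x, -α + [x ⊗ x])`. -/
noncomputable def finv (T : M ≃+ M) (g : ℤ × M × S T) : ℤ × M × S T :=
  (-g.1, -(Tz T (-g.1) g.2.1), -g.2.2 + cls T g.2.1 g.2.1)

lemma fmul_eq_mul (T : M ≃+ M) (g h : F T) : fmul T g h = g * h := rfl

lemma finv_eq_inv (T : M ≃+ M) (g : F T) : finv T g = g⁻¹ := rfl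

lemma zero_zero_zero_eq_one (T : M ≃+ M) : (((0 : ℤ), (0 : M), (0 : S T)) : F T) = 1 := rfl

/-- The set `F(M,T) = ℤ × M × S(M,T)` with multiplication
`(k, x, α)(m, y, β) = (k + m, T^m x + y, α + β + [T^m x ⊗ y])` is a group, with
identity `(0, 0, 0)` and inverse `(k, x, α)⁻¹ = (-k, -T^{-k} x, -α + [x ⊗ x])`. -/
theorem statement10 (T : M ≃+ M) :
    (∀ g h k : ℤ × M × S T, fmul T (fmul T g h) k = fmul T g (fmul T h k)) ∧
    (∀ g : ℤ × M × S T, fmul T ((0 : ℤ), (0 : M), (0 : S T)) g = g) ∧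
    (∀ g : ℤ × M × S T, fmul T g ((0 : ℤ), (0 : M), (0 : S T)) = g) ∧
    (∀ g : ℤ × M × S T, fmul T (finv T g) g = ((0 : ℤ), (0 : M), (0 : S T))) ∧
    (∀ g : ℤ × M × S T, fmul T g (finv T g) = ((0 : ℤ), (0 : M), (0 : S T))) := by
  simp only [fmul_eq_mul, finv_eq_inv, zero_zero_zero_eq_one]
  exact ⟨mul_assoc, one_mul, mul_one, inv_mul_cancel, mul_inv_cancel⟩

end Clauwens
end

section
/- There is a group homomorphism φ : Adj(A(M,T)) → F(M,T) with φ(e_x) = (1, x, 0) for every x ∈ M. -/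
/-!
Common setup: the adjoint group of the Alexander quandle `A(M,T)` (F.J.-B.J. Clauwens,
"The adjoint group of an Alexander quandle").

For an abelian group `M` with automorphism `T`, the Alexander quandle `A(M,T)` is `M` with
`y * x = T y + x - T x`, and the adjoint group `Adj(A(M,T))` is presented with generators
`e x` for `x : M` and relations `e (y * x) = (e x)⁻¹ * e y * e x`.
-/

open scoped TensorProduct

namespace Clauwens

variable {M : Type*} [AddCommGroup M]

noncomputable def gen (T : M ≃+ M) (x : M) : F T := ((1 : ℤ), x, (0 : S T))

lemma cls_T_left (T : M ≃+ M) (z x : M) : cls T (T z) x = cls T x z :=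
  mk_τmap T (x ⊗ₜ[ℤ] z)

lemma gen_mul_gen (T : M ≃+ M) (x y : M) :
    gen T x * gen T y = ((2 : ℤ), T x + y, cls T (T x) y) := by
  show ((1 + 1 : ℤ), Tz T 1 x + y, 0 + 0 + cls T (Tz T 1 x) y) = _
  rw [Tz_one, add_zero]
  rfl

/-- The quandle relation `e_{y*x} = e_x⁻¹ e_y e_x`, cleared of inverses: both sides are
`(2, T y + x, [T y ⊗ x])`. -/
lemma gen_mul_gen_quandle (T : M ≃+ M) (x y : M) :
    gen T x * gen T (T y + x - T x) = gen T y * gen T x := by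
  have hcls : cls T (T x) (T y + x - T x) = cls T x y := by
    have h := cls_add_right T (T x) (T y + x - T x) (T x)
    rw [sub_add_cancel, cls_add_right, cls_T, cls_T_left, cls_T] at h
    exact (add_right_cancel h).symm
  rw [gen_mul_gen, gen_mul_gen, hcls, cls_T_left, add_sub_cancel]

/-- There is a group homomorphism `φ : Adj(A(M,T)) → F(M,T)` with `φ(e_x) = (1, x, 0)`
for every `x ∈ M`. -/
theorem statement11 (T : M ≃+ M) :
    ∃ φ : Adj T →* F T, ∀ x : M, φ (e T x) = (((1 : ℤ), x, (0 : S T)) : F T) := by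
  refine ⟨PresentedGroup.toGroup (f := gen T) ?_, fun x => PresentedGroup.toGroup.of ..⟩
  rintro r ⟨x, y, rfl⟩
  simp only [map_mul, map_inv, FreeGroup.lift_apply_of]
  rw [mul_inv_eq_one, mul_assoc, eq_inv_mul_iff_mul_eq]
  exact gen_mul_gen_quandle T x y

end Clauwens
end

section
/- Assume that 1 − T : M → M is invertible, and let φ : Adj(A(M,T)) → F(M,T) be the isomorphism with φ(e_x) = (1, x, 0). For all u, v ∈ M, the element γ[u ⊗ v]^{-1} := e_{u+v}^{-1} e_u e_0^{-1} e_v of Adj(A(M,T)) satisfies φ(e_{u+v}^{-1} e_u e_0^{-1} e_v) = (0, 0, [u ⊗ v]). -/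
/-!
Common setup: the adjoint group of the Alexander quandle `A(M,T)` (F.J.-B.J. Clauwens,
"The adjoint group of an Alexander quandle").

For an abelian group `M` with automorphism `T`, the Alexander quandle `A(M,T)` is `M` with
`y * x = T y + x - T x`, and the adjoint group `Adj(A(M,T))` is presented with generators
`e x` for `x : M` and relations `e (y * x) = (e x)⁻¹ * e y * e x`.
-/

open scoped TensorProduct

namespace Clauwens

variable {M : Type*} [AddCommGroup M]

lemma F_mul_def (T : M ≃+ M) (a b : ℤ) (x y : M) (α β : S T) :
    ((a, x, α) : F T) * (b, y, β) = (a + b, Tz T b x + y, α + β + cls T (Tz T b x) y) := rfl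

lemma F_mk_one_eq (T : M ≃+ M) (x : M) :
    ((1, x, 0) : F T) = (1, 0, 0) * (0, x, 0) := by
  simp only [F_mul_def, map_zero, add_zero, zero_add, cls_zero_left]

lemma F_mk_zero_mul_mk_zero (T : M ≃+ M) (x y : M) :
    ((0, x, 0) : F T) * (0, y, 0) = (0, x + y, cls T x y) := by
  simp only [F_mul_def, Tz_zero, add_zero, zero_add]

lemma F_mk_zero_mul_central (T : M ≃+ M) (x : M) (α : S T) :
    ((0, x, 0) : F T) * (0, 0, α) = (0, x, α) := by
  simp only [F_mul_def, Tz_zero, add_zero, zero_add, cls_zero_right]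

theorem statement13_general (T : M ≃+ M)
    (φ : Adj T →* F T) (hφ : ∀ x : M, φ (e T x) = (((1 : ℤ), x, (0 : S T)) : F T))
    (u v : M) :
    φ ((e T (u + v))⁻¹ * e T u * (e T 0)⁻¹ * e T v)
      = (((0 : ℤ), (0 : M), cls T u v) : F T) := by
  set t : F T := (1, 0, 0)
  -- Each `φ (e_x)` is `t` followed by `(0, x, 0)`; the `t`s cancel in pairs.
  have hφt : ∀ x : M, φ (e T x) = t * (0, x, 0) := fun x => (hφ x).trans (F_mk_one_eq T x)
  simp only [map_mul, map_inv, hφt]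
  calc (t * (0, u + v, 0))⁻¹ * (t * (0, u, 0)) * (t * (0, 0, 0))⁻¹ * (t * (0, v, 0))
      = ((0, u + v, 0) : F T)⁻¹ * ((0, u, 0) * (0, v, 0)) := by
        rw [show ((0, 0, 0) : F T) = 1 from rfl]; group
    _ = ((0, u + v, 0) : F T)⁻¹ * ((0, u + v, 0) * (0, 0, cls T u v)) := by
        rw [F_mk_zero_mul_mk_zero, F_mk_zero_mul_central]
    _ = (0, 0, cls T u v) := inv_mul_cancel_left _ _

/-- If `1 - T` is invertible and `φ : Adj(A(M,T)) → F(M,T)` is the isomorphism with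
`φ(e_x) = (1, x, 0)`, then `φ(e_{u+v}⁻¹ e_u e_0⁻¹ e_v) = (0, 0, [u ⊗ v])` for all `u v ∈ M`. -/
theorem statement13 (T : M ≃+ M) (hT : Function.Bijective fun x : M => x - T x)
    (φ : Adj T →* F T) (hφ : ∀ x : M, φ (e T x) = (((1 : ℤ), x, (0 : S T)) : F T))
    (u v : M) :
    φ ((e T (u + v))⁻¹ * e T u * (e T 0)⁻¹ * e T v)
      = (((0 : ℤ), (0 : M), cls T u v) : F T) :=
  statement13_general T φ hφ u v

end Clauwens
end
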